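/- With the setup above (Lemma 2.5 of the paper), the map v ↦ 𝔹(λ)v restricted to ker 𝔻(λ) is a bijection onto ker 𝔻_m(λ̄)*, and the map v ↦ 𝔻(λ)v restricted to ker 𝔹(λ) is a bijection onto ker 𝔹_m(λ̄)*. In particular dim ker 𝔻(λ) = dim ker 𝔻_m(λ̄)* and dim ker 𝔹(λ) = dim ker 𝔹_m(λ̄)*. -/

import Mathlib

open scoped Matrix

/-- Strips the first `n` components of a vector in `ℂ^{n(M+2)}`. -/
noncomputable def ETop (n M : ℕ) : Matrix (Fin n × Fin (M + 1)) (Fin n × Fin (M + 2)) ℂ :=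
  fun p q => if q = (p.1, p.2.succ) then 1 else 0

/-- Strips the last `n` components of a vector in `ℂ^{n(M+2)}`. -/
noncomputable def EBot (n M : ℕ) : Matrix (Fin n × Fin (M + 1)) (Fin n × Fin (M + 2)) ℂ :=
  fun p q => if q = (p.1, p.2.castSucc) then 1 else 0

/-- The embedding `ℂ^{nM} → ℂ^{n(M+2)}` onto the middle coordinates; composing with it
deletes the first and last `n` columns of a matrix with `n(M+2)` columns. -/
noncomputable def EMid (n M : ℕ) : Matrix (Fin n × Fin (M + 2)) (Fin n × Fin M) ℂ :=
  fun p q => if p = (q.1, q.2.succ.castSucc) then 1 else 0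

/-!
Write `V = ℂ^{n(M+2)}`, `W = ℂ^{n(M+1)}`, `X = ℂ^{nM}`, `D = 𝔻`, `B = 𝔹`, `D' = 𝔻_m(λ̄)*` and
`B' = 𝔹_m(λ̄)*`. Expanding both products and using `ℬ − ℬ'* = 2𝒥` and `𝒰'*𝒥𝒰 = 𝒥` gives
`D' B = B' D`, so `B` maps `ker D` into `ker D'` and `D` maps `ker B` into `ker B'`; both maps
are injective because `ker B ∩ ker D = 0`. The operators `D` and `D'` are block bidiagonal with an
identity diagonal, hence surjective, so `dim ker D = n = dim ker D'` and `B : ker D → ker D'` is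
onto. Finally, if `B' y = 0`, write `y = D u`; then `B u ∈ ker D'`, so `B u = B v` with
`v ∈ ker D`, and `u − v ∈ ker B` is mapped to `y` by `D`.
-/

open Matrix Module LinearMap Function

section KernelCorrespondence

variable {K V W X : Type*} [Field K] [AddCommGroup V] [Module K V] [AddCommGroup W] [Module K W]
  [AddCommGroup X] [Module K X] {B D : V →ₗ[K] W} {B' D' : W →ₗ[K] X}

theorem finrank_eq_of_bijOn {f : V →ₗ[K] W} {p : Submodule K V} {q : Submodule K W}
    (h : Set.BijOn f p q) : finrank K p = finrank K q :=
  (LinearEquiv.ofBijective (f.restrict h.mapsTo) h.bijective).finrank_eq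

theorem mapsTo_ker_of_comp_eq (hcomm : D' ∘ₗ B = B' ∘ₗ D) :
    Set.MapsTo B (ker D) (ker D') := fun v hv => by
  rw [SetLike.mem_coe, mem_ker] at hv ⊢
  rw [← LinearMap.comp_apply, hcomm, LinearMap.comp_apply, hv, map_zero]

theorem bijOn_ker_of_comp_eq [FiniteDimensional K V] [FiniteDimensional K W]
    (hcomm : D' ∘ₗ B = B' ∘ₗ D) (hdisj : Disjoint (ker B) (ker D))
    (hD : Surjective D) (hD' : Surjective D')
    (hdim : finrank K V + finrank K X = 2 * finrank K W) :
    Set.BijOn B (ker D) (ker D') := by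
  have hmaps := mapsTo_ker_of_comp_eq hcomm
  have hinj : Set.InjOn B (ker D) := injOn_of_disjoint_ker subset_rfl hdisj.symm
  have hrank : finrank K (ker D) = finrank K (ker D') := by
    have hV := finrank_range_add_finrank_ker D
    have hW := finrank_range_add_finrank_ker D'
    rw [range_eq_top.mpr hD, finrank_top] at hV
    rw [range_eq_top.mpr hD', finrank_top] at hW
    omega
  have hsurj := (injective_iff_surjective_of_finrank_eq_finrank hrank (f := B.restrict hmaps)).mp
    fun x y hxy => Subtype.ext (hinj x.2 y.2 (congrArg Subtype.val hxy))
  refine ⟨hmaps, hinj, fun y hy => ?_⟩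
  obtain ⟨⟨x, hx⟩, hxy⟩ := hsurj ⟨y, hy⟩
  exact ⟨x, hx, congrArg Subtype.val hxy⟩

theorem bijOn_ker_of_bijOn_ker (hcomm : D' ∘ₗ B = B' ∘ₗ D) (hdisj : Disjoint (ker B) (ker D))
    (hD : Surjective D) (hB : Set.BijOn B (ker D) (ker D')) :
    Set.BijOn D (ker B) (ker B') := by
  refine ⟨mapsTo_ker_of_comp_eq hcomm.symm, injOn_of_disjoint_ker subset_rfl hdisj, fun y hy => ?_⟩
  obtain ⟨u, rfl⟩ := hD y
  have hBu : B u ∈ ker D' := by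
    rw [mem_ker, ← LinearMap.comp_apply, hcomm, LinearMap.comp_apply]
    exact hy
  obtain ⟨v, hv, hvu⟩ := hB.surjOn hBu
  refine ⟨u - v, ?_, ?_⟩
  · rw [SetLike.mem_coe, mem_ker, map_sub, hvu, sub_self]
  · rw [map_sub, (mem_ker.mp hv : D v = 0), sub_zero]

end KernelCorrespondence

theorem surjective_apply_castSucc_add_succ {E : Type*} [AddGroup E] {m : ℕ} (A : Fin m → E → E) :
    Surjective fun (v : Fin (m + 1) → E) (j : Fin m) => A j (v j.castSucc) + v j.succ := by
  intro y
  refine ⟨fun i => Fin.induction 0 (fun j vj => -A j vj + y j) i, funext fun j => ?_⟩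
  simp [Fin.induction_succ]

theorem surjective_castSucc_add_apply_succ {E : Type*} [AddGroup E] {m : ℕ} (A : Fin m → E → E) :
    Surjective fun (v : Fin (m + 1) → E) (j : Fin m) => v j.castSucc + A j (v j.succ) := by
  intro y
  refine ⟨fun i => Fin.reverseInduction 0 (fun j vj => y j - A j vj) i, funext fun j => ?_⟩
  simp [Fin.reverseInduction_castSucc]

theorem isUnit_blockDiagonal {ι κ R : Type*} [Fintype ι] [DecidableEq ι] [Fintype κ]
    [DecidableEq κ] [CommRing R] {A : κ → Matrix ι ι R} (h : ∀ j, IsUnit (A j)) :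
    IsUnit (blockDiagonal A) :=
  (Pi.isUnit_iff.mpr h).map (blockDiagonalRingHom ι κ R)

section BlockCol

variable {ι κ κ' R : Type*}

def blockCol (v : ι × κ → R) (j : κ) : ι → R := fun i => v (i, j)

theorem blockCol_injective : Injective (blockCol : (ι × κ → R) → κ → ι → R) :=
  fun _ _ h => funext fun p => congrFun (congrFun h p.2) p.1

theorem surjective_of_blockCol {T : (ι × κ → R) → ι × κ' → R} {F : (κ → ι → R) → κ' → ι → R}
    (hT : ∀ v, blockCol (T v) = F (blockCol v)) (hF : Surjective F) : Surjective T := by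
  intro y
  obtain ⟨w, hw⟩ := hF (blockCol y)
  exact ⟨fun p => w p.2 p.1, blockCol_injective (by rw [hT, ← hw]; rfl)⟩

@[simp] theorem blockCol_zero [Zero R] (j : κ) : blockCol (0 : ι × κ → R) j = 0 := rfl

@[simp] theorem blockCol_add [Add R] (v w : ι × κ → R) (j : κ) :
    blockCol (v + w) j = blockCol v j + blockCol w j := rfl

@[simp] theorem blockCol_smul [Mul R] (c : R) (v : ι × κ → R) (j : κ) :
    blockCol (c • v) j = c • blockCol v j := rfl

@[simp] theorem blockCol_blockDiagonal_mulVec [Fintype ι] [Fintype κ] [DecidableEq κ] [CommRing R]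
    (A : κ → Matrix ι ι R) (v : ι × κ → R) (j : κ) :
    blockCol (blockDiagonal A *ᵥ v) j = A j *ᵥ blockCol v j := by
  ext i
  simp [blockCol, mulVec, dotProduct, blockDiagonal_apply, Fintype.sum_prod_type, ite_mul]

end BlockCol

section Shifts

variable {n M : ℕ}

@[simp] theorem blockCol_ETop_mulVec (v : Fin n × Fin (M + 2) → ℂ) (j : Fin (M + 1)) :
    blockCol (ETop n M *ᵥ v) j = blockCol v j.succ := by
  ext i
  simp [blockCol, ETop, mulVec, dotProduct, ite_mul]

@[simp] theorem blockCol_EBot_mulVec (v : Fin n × Fin (M + 2) → ℂ) (j : Fin (M + 1)) :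
    blockCol (EBot n M *ᵥ v) j = blockCol v j.castSucc := by
  ext i
  simp [blockCol, EBot, mulVec, dotProduct, ite_mul]

theorem blockCol_conjTranspose_EMid_mulVec (v : Fin n × Fin (M + 2) → ℂ) (k : Fin M) :
    blockCol ((EMid n M)ᴴ *ᵥ v) k = blockCol v k.succ.castSucc := by
  ext i
  simp [blockCol, EMid, mulVec, dotProduct, conjTranspose_apply, apply_ite, ite_mul]

theorem blockCol_conjTranspose_ETop_mulVec_succ (v : Fin n × Fin (M + 1) → ℂ) (j : Fin (M + 1)) :
    blockCol ((ETop n M)ᴴ *ᵥ v) j.succ = blockCol v j := by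
  ext i
  simp [blockCol, ETop, mulVec, dotProduct, conjTranspose_apply, apply_ite,
    Fintype.sum_prod_type, ite_and]

theorem blockCol_conjTranspose_EBot_mulVec_castSucc (v : Fin n × Fin (M + 1) → ℂ)
    (j : Fin (M + 1)) : blockCol ((EBot n M)ᴴ *ᵥ v) j.castSucc = blockCol v j := by
  ext i
  simp [blockCol, EBot, mulVec, dotProduct, conjTranspose_apply, apply_ite,
    Fintype.sum_prod_type, ite_and]

@[simp] theorem blockCol_EMid_ETop_mulVec (v : Fin n × Fin (M + 1) → ℂ) (k : Fin M) :
    blockCol ((EMid n M)ᴴ *ᵥ ((ETop n M)ᴴ *ᵥ v)) k = blockCol v k.castSucc := by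
  rw [blockCol_conjTranspose_EMid_mulVec, ← Fin.succ_castSucc,
    blockCol_conjTranspose_ETop_mulVec_succ]

@[simp] theorem blockCol_EMid_EBot_mulVec (v : Fin n × Fin (M + 1) → ℂ) (k : Fin M) :
    blockCol ((EMid n M)ᴴ *ᵥ ((EBot n M)ᴴ *ᵥ v)) k = blockCol v k.succ := by
  rw [blockCol_conjTranspose_EMid_mulVec, blockCol_conjTranspose_EBot_mulVec_castSucc]

theorem disjoint_ker_ETop_ker_EBot :
    Disjoint (ker (ETop n M).mulVecLin) (ker (EBot n M).mulVecLin) := by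
  refine Submodule.disjoint_def.mpr fun v hTop hBot => blockCol_injective (funext fun p => ?_)
  rw [mem_ker, mulVecLin_apply] at hTop hBot
  cases p using Fin.cases with
  | zero => simpa using congrArg (blockCol · 0) hBot
  | succ j => simpa using congrArg (blockCol · j) hTop

theorem conjTranspose_EMid_mul_ETop_blockDiagonal_const (J : Matrix (Fin n) (Fin n) ℂ) :
    (EMid n M)ᴴ * ((ETop n M)ᴴ * (blockDiagonal (fun _ : Fin (M + 1) => J) * ETop n M))
      = (EMid n M)ᴴ * ((EBot n M)ᴴ * (blockDiagonal (fun _ : Fin (M + 1) => J) * EBot n M)) := by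
  refine ext_iff_mulVec.mpr fun v => blockCol_injective (funext fun k => ?_)
  simp [← mulVec_mulVec]

end Shifts

section Operators

variable {n M : ℕ} {U U' B B' 𝒥 : Matrix (Fin n × Fin (M + 1)) (Fin n × Fin (M + 1)) ℂ}

theorem conjTranspose_mul_eq_conjTranspose_mul (hU : U'ᴴ * 𝒥 * U = 𝒥)
    (hB : B - B'ᴴ = (2 : ℂ) • 𝒥)
    (h𝒥 : (EMid n M)ᴴ * ((ETop n M)ᴴ * (𝒥 * ETop n M))
      = (EMid n M)ᴴ * ((EBot n M)ᴴ * (𝒥 * EBot n M))) :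
    (((1 / 2 : ℂ) • (U' * EBot n M + ETop n M)) * EMid n M)ᴴ * (B'ᴴ * U * EBot n M + B * ETop n M)
      = ((Bᴴ * U' * EBot n M + B' * ETop n M) * EMid n M)ᴴ
        * ((1 / 2 : ℂ) • (U * EBot n M + ETop n M)) := by
  have hB' : B'ᴴ = B - (2 : ℂ) • 𝒥 := by rw [← hB, sub_sub_cancel]
  have hU' : U'ᴴ * (𝒥 * (U * EBot n M)) = 𝒥 * EBot n M := by
    rw [← Matrix.mul_assoc, ← Matrix.mul_assoc, hU]
  have hhalf : star (1 / 2 : ℂ) = 1 / 2 := by simp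
  simp only [hhalf, conjTranspose_mul, conjTranspose_add, conjTranspose_smul,
    conjTranspose_conjTranspose, hB', Matrix.mul_add, Matrix.add_mul, Matrix.mul_sub,
    Matrix.sub_mul, Matrix.mul_smul, Matrix.smul_mul, Matrix.mul_assoc, hU', h𝒥]
  module

theorem disjoint_ker_mulVecLin_EBot_ETop (hU : IsUnit U) (h𝒥 : IsUnit 𝒥)
    (hB : B - B'ᴴ = (2 : ℂ) • 𝒥) :
    Disjoint (ker (B'ᴴ * U * EBot n M + B * ETop n M).mulVecLin)
      (ker ((1 / 2 : ℂ) • (U * EBot n M + ETop n M)).mulVecLin) := by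
  refine Submodule.disjoint_def.mpr fun v hB0 hD0 => ?_
  simp only [mem_ker, mulVecLin_apply, smul_mulVec, add_mulVec, ← mulVec_mulVec] at hB0 hD0
  have hUv : U *ᵥ (EBot n M *ᵥ v) = -(ETop n M *ᵥ v) :=
    eq_neg_of_add_eq_zero_left ((smul_eq_zero.mp hD0).resolve_left (by norm_num))
  have hTop : ETop n M *ᵥ v = 0 := by
    refine mulVec_injective_iff_isUnit.mpr h𝒥 ?_
    have : (2 : ℂ) • (𝒥 *ᵥ (ETop n M *ᵥ v)) = 0 := by
      rw [← smul_mulVec, ← hB, sub_mulVec, ← hB0, hUv, mulVec_neg]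
      abel
    rw [mulVec_zero]
    exact (smul_eq_zero.mp this).resolve_left two_ne_zero
  have hBot : EBot n M *ᵥ v = 0 := by
    refine mulVec_injective_iff_isUnit.mpr hU ?_
    rw [hUv, hTop, neg_zero, mulVec_zero]
  exact Submodule.disjoint_def.mp disjoint_ker_ETop_ker_EBot v hTop hBot

theorem surjective_mulVec_blockDiagonal_EBot_add_ETop
    (Uf : Fin (M + 1) → Matrix (Fin n) (Fin n) ℂ) :
    Surjective ((1 / 2 : ℂ) • (blockDiagonal Uf * EBot n M + ETop n M)).mulVec := by
  refine surjective_of_blockCol (F := fun w j => (1 / 2 : ℂ) • (Uf j *ᵥ w j.castSucc + w j.succ))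
    (fun v => funext fun j => by simp [← mulVec_mulVec, add_mulVec, smul_mulVec]) fun y => ?_
  obtain ⟨w, hw⟩ := surjective_apply_castSucc_add_succ (fun j => (Uf j *ᵥ ·)) ((2 : ℂ) • y)
  refine ⟨w, funext fun j => ?_⟩
  simp [congrFun hw j, smul_smul]

theorem surjective_mulVec_conjTranspose_EMid (Uf : Fin (M + 1) → Matrix (Fin n) (Fin n) ℂ) :
    Surjective (((1 / 2 : ℂ) • (blockDiagonal Uf * EBot n M + ETop n M)) * EMid n M)ᴴ.mulVec := by
  refine surjective_of_blockCol
    (F := fun w k => (1 / 2 : ℂ) • (w k.castSucc + (Uf k.succ)ᴴ *ᵥ w k.succ))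
    (fun v => funext fun k => ?_) fun y => ?_
  · simp [conjTranspose_mul, ← mulVec_mulVec, add_mulVec, smul_mulVec, mulVec_add, mulVec_smul,
      blockDiagonal_conjTranspose, add_comm]
  obtain ⟨w, hw⟩ := surjective_castSucc_add_apply_succ (fun k => ((Uf k.succ)ᴴ *ᵥ ·)) ((2 : ℂ) • y)
  refine ⟨w, funext fun k => ?_⟩
  simp [congrFun hw k, smul_smul]

end Operators

theorem stmt_8_general (n M : ℕ) (J : Matrix (Fin n) (Fin n) ℂ) (hJ : IsUnit J)
    (Bf B'f Uf U'f : Fin (M + 1) → Matrix (Fin n) (Fin n) ℂ)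
    (hUinv : ∀ j, IsUnit (Uf j))
    (𝒥 : Matrix (Fin n × Fin (M + 1)) (Fin n × Fin (M + 1)) ℂ)
    (h𝒥 : 𝒥 = Matrix.blockDiagonal fun _ => J)
    (hU : (Matrix.blockDiagonal U'f)ᴴ * 𝒥 * Matrix.blockDiagonal Uf = 𝒥)
    (hB : Matrix.blockDiagonal Bf - (Matrix.blockDiagonal B'f)ᴴ = (2 : ℂ) • 𝒥)
    (𝔹 𝔻 𝔹' 𝔻' : Matrix (Fin n × Fin (M + 1)) (Fin n × Fin (M + 2)) ℂ)
    (h𝔹 : 𝔹 = (Matrix.blockDiagonal B'f)ᴴ * Matrix.blockDiagonal Uf * EBot n M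
      + Matrix.blockDiagonal Bf * ETop n M)
    (h𝔻 : 𝔻 = (1/2 : ℂ) • (Matrix.blockDiagonal Uf * EBot n M + ETop n M))
    (h𝔹' : 𝔹' = (Matrix.blockDiagonal Bf)ᴴ * Matrix.blockDiagonal U'f * EBot n M
      + Matrix.blockDiagonal B'f * ETop n M)
    (h𝔻' : 𝔻' = (1/2 : ℂ) • (Matrix.blockDiagonal U'f * EBot n M + ETop n M)) :
    Set.BijOn 𝔹.mulVec (LinearMap.ker 𝔻.mulVecLin) (LinearMap.ker ((𝔻' * EMid n M)ᴴ).mulVecLin) ∧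
    Set.BijOn 𝔻.mulVec (LinearMap.ker 𝔹.mulVecLin) (LinearMap.ker ((𝔹' * EMid n M)ᴴ).mulVecLin) ∧
    Module.finrank ℂ (LinearMap.ker 𝔻.mulVecLin)
      = Module.finrank ℂ (LinearMap.ker ((𝔻' * EMid n M)ᴴ).mulVecLin) ∧
    Module.finrank ℂ (LinearMap.ker 𝔹.mulVecLin)
      = Module.finrank ℂ (LinearMap.ker ((𝔹' * EMid n M)ᴴ).mulVecLin) := by
  subst h𝒥 h𝔹 h𝔻 h𝔹' h𝔻'
  have hcomm := conjTranspose_mul_eq_conjTranspose_mul hU hB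
    (conjTranspose_EMid_mul_ETop_blockDiagonal_const J)
  replace hcomm := congrArg mulVecLin hcomm
  rw [mulVecLin_mul, mulVecLin_mul] at hcomm
  have hdisj := disjoint_ker_mulVecLin_EBot_ETop (isUnit_blockDiagonal hUinv)
    (isUnit_blockDiagonal fun _ => hJ) hB
  have hD := surjective_mulVec_blockDiagonal_EBot_add_ETop Uf
  have hdim : finrank ℂ (Fin n × Fin (M + 2) → ℂ) + finrank ℂ (Fin n × Fin M → ℂ)
      = 2 * finrank ℂ (Fin n × Fin (M + 1) → ℂ) := by
    simp only [finrank_fintype_fun_eq_card, Fintype.card_prod, Fintype.card_fin]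
    ring
  have h₁ := bijOn_ker_of_comp_eq hcomm hdisj hD (surjective_mulVec_conjTranspose_EMid U'f) hdim
  have h₂ := bijOn_ker_of_bijOn_ker hcomm hdisj hD h₁
  exact ⟨h₁, h₂, finrank_eq_of_bijOn h₁, finrank_eq_of_bijOn h₂⟩

/-- Lemma 2.5: `𝔹(λ)` restricted to `ker 𝔻(λ)` is a bijection onto `ker 𝔻_m(λ̄)*`,
and `𝔻(λ)` restricted to `ker 𝔹(λ)` is a bijection onto `ker 𝔹_m(λ̄)*`; in particular
the corresponding kernels have equal dimensions. -/
theorem stmt_8 (n M : ℕ) (J : Matrix (Fin n) (Fin n) ℂ) (hJ : IsUnit J)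
    (Bf B'f Uf U'f : Fin (M + 1) → Matrix (Fin n) (Fin n) ℂ)
    (hUinv : ∀ j, IsUnit (Uf j)) (hU'inv : ∀ j, IsUnit (U'f j))
    (𝒥 : Matrix (Fin n × Fin (M + 1)) (Fin n × Fin (M + 1)) ℂ)
    (h𝒥 : 𝒥 = Matrix.blockDiagonal fun _ => J)
    (hU : (Matrix.blockDiagonal U'f)ᴴ * 𝒥 * Matrix.blockDiagonal Uf = 𝒥)
    (hB : Matrix.blockDiagonal Bf - (Matrix.blockDiagonal B'f)ᴴ = (2 : ℂ) • 𝒥)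
    (𝔹 𝔻 𝔹' 𝔻' : Matrix (Fin n × Fin (M + 1)) (Fin n × Fin (M + 2)) ℂ)
    (h𝔹 : 𝔹 = (Matrix.blockDiagonal B'f)ᴴ * Matrix.blockDiagonal Uf * EBot n M
      + Matrix.blockDiagonal Bf * ETop n M)
    (h𝔻 : 𝔻 = (1/2 : ℂ) • (Matrix.blockDiagonal Uf * EBot n M + ETop n M))
    (h𝔹' : 𝔹' = (Matrix.blockDiagonal Bf)ᴴ * Matrix.blockDiagonal U'f * EBot n M
      + Matrix.blockDiagonal B'f * ETop n M)
    (h𝔻' : 𝔻' = (1/2 : ℂ) • (Matrix.blockDiagonal U'f * EBot n M + ETop n M)) :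
    Set.BijOn 𝔹.mulVec (LinearMap.ker 𝔻.mulVecLin) (LinearMap.ker ((𝔻' * EMid n M)ᴴ).mulVecLin) ∧
    Set.BijOn 𝔻.mulVec (LinearMap.ker 𝔹.mulVecLin) (LinearMap.ker ((𝔹' * EMid n M)ᴴ).mulVecLin) ∧
    Module.finrank ℂ (LinearMap.ker 𝔻.mulVecLin)
      = Module.finrank ℂ (LinearMap.ker ((𝔻' * EMid n M)ᴴ).mulVecLin) ∧
    Module.finrank ℂ (LinearMap.ker 𝔹.mulVecLin)
      = Module.finrank ℂ (LinearMap.ker ((𝔹' * EMid n M)ᴴ).mulVecLin) :=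
  stmt_8_general n M J hJ Bf B'f Uf U'f hUinv 𝒥 h𝒥 hU hB 𝔹 𝔻 𝔹' 𝔻' h𝔹 h𝔻 h𝔹' h𝔻'
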